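/- arXiv:1009.5019 — 9 statements merged into one kernel-verified Lean document; each statement's English description precedes it below -/
import Mathlib

section
/- The smallest subset M of the rationals that contains 1 and is closed under the operations q ↦ 1/q (for q ∈ M, q ≠ 0) and (q₁, q₂) ↦ q₁ + q₂ (for q₁, q₂ ∈ M) is exactly the set of all positive rationals: M = {q ∈ ℚ : q > 0}. -/
structure InvAddClosed {K : Type*} [DivisionSemiring K] (S : Set K) : Prop where
  one_mem : 1 ∈ S
  inv_mem : ∀ q ∈ S, q ≠ 0 → q⁻¹ ∈ S
  add_mem : ∀ q₁ ∈ S, ∀ q₂ ∈ S, q₁ + q₂ ∈ S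

namespace InvAddClosed

variable {K : Type*}

theorem setOf_pos [Semifield K] [LinearOrder K] [IsStrictOrderedRing K] :
    InvAddClosed {q : K | 0 < q} :=
  ⟨one_pos, fun _ hq _ ↦ inv_pos.mpr hq, fun _ h₁ _ h₂ ↦ add_pos h₁ h₂⟩

variable [DivisionSemiring K] [CharZero K] {S : Set K}

theorem natCast_add_div_self {a c : ℕ} (ha : 0 < a) :
    ((a + c : ℕ) : K) / a = c / a + 1 := by
  rw [Nat.cast_add, add_div, div_self (Nat.cast_ne_zero.mpr ha.ne'), add_comm]

/-- The subtractive Euclidean algorithm on `a / b`, run backwards. -/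
theorem natCast_div_mem (hS : InvAddClosed S) {a b : ℕ} (ha : 0 < a) (hb : 0 < b) :
    (a / b : K) ∈ S := by
  rcases lt_trichotomy a b with hab | rfl | hab
  · obtain ⟨c, rfl⟩ := Nat.exists_eq_add_of_le hab.le
    have hba : ((a + c : ℕ) : K) / a ∈ S := by
      rw [natCast_add_div_self ha]
      exact hS.add_mem _ (hS.natCast_div_mem (by omega) ha) _ hS.one_mem
    have hba_ne : ((a + c : ℕ) : K) / a ≠ 0 :=
      div_ne_zero (Nat.cast_ne_zero.mpr hb.ne') (Nat.cast_ne_zero.mpr ha.ne')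
    simpa only [inv_div] using hS.inv_mem _ hba hba_ne
  · rw [div_self (Nat.cast_ne_zero.mpr ha.ne')]
    exact hS.one_mem
  · obtain ⟨c, rfl⟩ := Nat.exists_eq_add_of_le hab.le
    rw [natCast_add_div_self hb]
    exact hS.add_mem _ (hS.natCast_div_mem (by omega) hb) _ hS.one_mem
termination_by a + b

theorem mem_of_pos {S : Set ℚ} (hS : InvAddClosed S) {q : ℚ} (hq : 0 < q) : q ∈ S := by
  have hnum : 0 < q.num := Rat.num_pos.mpr hq
  have hmem := hS.natCast_div_mem (Int.lt_toNat.mpr hnum) q.den_pos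
  have hcast : ((q.num.toNat : ℕ) : ℚ) = q.num := mod_cast Int.toNat_of_nonneg hnum.le
  rwa [hcast, Rat.num_div_den] at hmem

end InvAddClosed

theorem stmt_1 :
    ⋂₀ {S : Set ℚ | 1 ∈ S ∧ (∀ q ∈ S, q ≠ 0 → q⁻¹ ∈ S) ∧
        ∀ q₁ ∈ S, ∀ q₂ ∈ S, q₁ + q₂ ∈ S} = {q : ℚ | 0 < q} := by
  have hpos := InvAddClosed.setOf_pos (K := ℚ)
  ext q
  refine ⟨fun h ↦ Set.mem_sInter.mp h _ ⟨hpos.1, hpos.2, hpos.3⟩, ?_⟩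
  rintro hq S ⟨h1, hinv, hadd⟩
  exact InvAddClosed.mem_of_pos ⟨h1, hinv, hadd⟩ hq
end

section
/- Define finite sets of rationals by L₁ = U₁ = W₁ = ∅ and, for every i ≥ 1, L_{i+1} = { q/(1+q) : q ∈ W_i ∪ {1} }, U_{i+1} = { (1+q)/(1+3q) : q ∈ W_i ∪ {1} }, and W_{i+1} = L_{i+1} ∪ U_{i+1}. Then for every i ≥ 3: (1) the minimum element of L_i is 1/i and the maximum element of L_i is 1/2; (2) if q₁ < q₂ are consecutive elements of L_i (no element of L_i lies strictly between them), then q₂ − q₁ ≤ 1/i; (3) the maximum element of U_i is i/(i+2) and the minimum element of U_i is 1/2; (4) if q₁ < q₂ are consecutive elements of U_i, then q₂ − q₁ ≤ 2/(i+2). -/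
/-- The map `q ↦ q/(1+q)`. -/
def Lmap (q : ℚ) : ℚ := q / (1 + q)

/-- The map `q ↦ (1+q)/(1+3q)`. -/
def Umap (q : ℚ) : ℚ := (1 + q) / (1 + 3 * q)

/-- `Wset i` is the set `W_i`: `W₁ = ∅` and `W_{i+1} = L_{i+1} ∪ U_{i+1}`. -/
def Wset : ℕ → Set ℚ
  | 0 => ∅
  | 1 => ∅
  | (n + 2) => (Lmap '' (Wset (n + 1) ∪ {1})) ∪ (Umap '' (Wset (n + 1) ∪ {1}))

/-- `Lset i` is the set `L_i`: `L₁ = ∅` and `L_{i+1} = { q/(1+q) : q ∈ W_i ∪ {1} }`. -/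
def Lset : ℕ → Set ℚ
  | 0 => ∅
  | 1 => ∅
  | (n + 2) => Lmap '' (Wset (n + 1) ∪ {1})

/-- `Uset i` is the set `U_i`: `U₁ = ∅` and `U_{i+1} = { (1+q)/(1+3q) : q ∈ W_i ∪ {1} }`. -/
def Uset : ℕ → Set ℚ
  | 0 => ∅
  | 1 => ∅
  | (n + 2) => Umap '' (Wset (n + 1) ∪ {1})

/-!
Put `X_i = W_i ∪ {0, 1}`. Since `L 0 = 0` and `U 0 = 1`, we get `X_{i+1} = L(X_i) ∪ U(X_i)`, where
`L` is increasing and `U` decreasing on `[0, 1]`, `L(X_i) ⊆ [0, 1/2]`, `U(X_i) ⊆ [1/2, 1]`, and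
both contain `1/2 = L 1 = U 1`. Hence two consecutive elements of `X_{i+1}` are the images under
`L`, or under `U`, of two consecutive elements of `X_i`. The invariant is that consecutive `x < y`
in `X_i` satisfy `L y - L x ≤ 1/(i+1)` (these are the gaps of `L_{i+1} ∪ {0}`); it propagates
through both maps by elementary inequalities, and it also bounds the gaps `U x - U y` of
`U_{i+1}` by `2/(i+3)`. The extreme values come from `min (W_i ∪ {1}) = 1/i`, `L(1/i) = 1/(i+1)`
and `U(1/i) = (i+1)/(i+3)`.
-/

open Set

section Consecutive

variable {α : Type*}

def Consecutive [Preorder α] (S : Set α) (a b : α) : Prop :=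
  a ∈ S ∧ b ∈ S ∧ a < b ∧ ∀ c ∈ S, ¬(a < c ∧ c < b)

theorem Consecutive.of_subset [Preorder α] {S T : Set α} {a b : α} (h : Consecutive T a b)
    (hST : S ⊆ T) (ha : a ∈ S) (hb : b ∈ S) : Consecutive S a b :=
  ⟨ha, hb, h.2.2.1, fun c hc => h.2.2.2 c (hST hc)⟩

theorem Consecutive.insert [Preorder α] {S : Set α} {a b c : α} (h : Consecutive S a b)
    (hc : c ∉ Ioo a b) : Consecutive (insert c S) a b := by
  obtain ⟨ha, hb, hab, hgap⟩ := h
  refine ⟨mem_insert_of_mem c ha, mem_insert_of_mem c hb, hab, ?_⟩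
  rintro d (rfl | hd)
  · exact hc
  · exact hgap d hd

theorem StrictMonoOn.consecutive_of_image [LinearOrder α] {β : Type*} [Preorder β] {f : α → β}
    {S : Set α} (hf : StrictMonoOn f S) {x y : α} (hx : x ∈ S) (hy : y ∈ S)
    (h : Consecutive (f '' S) (f x) (f y)) : Consecutive S x y := by
  refine ⟨hx, hy, (hf.lt_iff_lt hx hy).1 h.2.2.1, fun z hz ⟨hxz, hzy⟩ => ?_⟩
  exact h.2.2.2 (f z) (mem_image_of_mem f hz) ⟨hf hx hz hxz, hf hz hy hzy⟩

theorem StrictAntiOn.consecutive_of_image [LinearOrder α] {β : Type*} [Preorder β] {f : α → β}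
    {S : Set α} (hf : StrictAntiOn f S) {x y : α} (hx : x ∈ S) (hy : y ∈ S)
    (h : Consecutive (f '' S) (f x) (f y)) : Consecutive S y x := by
  refine ⟨hy, hx, (hf.lt_iff_gt hx hy).1 h.2.2.1, fun z hz ⟨hyz, hzx⟩ => ?_⟩
  exact h.2.2.2 (f z) (mem_image_of_mem f hz) ⟨hf hz hx hzx, hf hy hz hyz⟩

theorem Consecutive.of_union [LinearOrder α] {A B : Set α} {a b m : α} (hA : A ⊆ Iic m)
    (hB : B ⊆ Ici m) (hmA : m ∈ A) (hmB : m ∈ B) (h : Consecutive (A ∪ B) a b) :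
    Consecutive A a b ∨ Consecutive B a b := by
  obtain ⟨ha, hb, hab, hgap⟩ := h
  rcases le_or_gt b m with hbm | hmb
  · have hA_mem : ∀ x ∈ A ∪ B, x ≤ m → x ∈ A := fun x hx hxm =>
      hx.elim id fun hxB => le_antisymm hxm (hB hxB) ▸ hmA
    exact Or.inl (Consecutive.of_subset ⟨ha, hb, hab, hgap⟩ subset_union_left
      (hA_mem a ha (hab.le.trans hbm)) (hA_mem b hb hbm))
  · have hma : m ≤ a := le_of_not_gt fun ham => hgap m (Or.inl hmA) ⟨ham, hmb⟩
    have hB_mem : ∀ x ∈ A ∪ B, m ≤ x → x ∈ B := fun x hx hmx =>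
      hx.elim (fun hxA => le_antisymm (hA hxA) hmx ▸ hmB) id
    exact Or.inr (Consecutive.of_subset ⟨ha, hb, hab, hgap⟩ subset_union_right
      (hB_mem a ha hma) (hB_mem b hb (hma.trans hab.le)))

end Consecutive

theorem Lmap_zero : Lmap 0 = 0 := by norm_num [Lmap]

theorem Umap_zero : Umap 0 = 1 := by norm_num [Umap]

theorem Lmap_one : Lmap 1 = 1 / 2 := by norm_num [Lmap]

theorem Umap_one : Umap 1 = 1 / 2 := by norm_num [Umap]

theorem Lmap_one_div {x : ℚ} (hx : x ≠ 0) : Lmap (1 / x) = 1 / (x + 1) := by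
  rw [Lmap]
  field_simp

theorem Umap_one_div {x : ℚ} (hx : x ≠ 0) : Umap (1 / x) = (x + 1) / (x + 3) := by
  rw [Umap]
  field_simp

theorem Lmap_sub_Lmap {a b : ℚ} (ha : 1 + a ≠ 0) (hb : 1 + b ≠ 0) :
    Lmap b - Lmap a = (b - a) / ((1 + a) * (1 + b)) := by
  rw [Lmap, Lmap, div_sub_div _ _ hb ha]
  ring

theorem strictMonoOn_Lmap : StrictMonoOn Lmap (Ioi (-1)) := by
  intro a ha b hb hab
  simp only [mem_Ioi] at ha hb
  rw [← sub_pos, Lmap_sub_Lmap (by linarith) (by linarith)]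
  exact div_pos (by linarith) (mul_pos (by linarith) (by linarith))

theorem strictAntiOn_Umap : StrictAntiOn Umap (Ioi (-1 / 3)) := by
  intro a ha b hb hab
  simp only [mem_Ioi] at ha hb
  rw [Umap, Umap, div_lt_div_iff₀ (by linarith) (by linarith)]
  nlinarith

theorem strictMonoOn_Lmap_Icc : StrictMonoOn Lmap (Icc 0 1) :=
  strictMonoOn_Lmap.mono ((Icc_subset_Ioi_iff zero_le_one).2 (by norm_num))

theorem strictAntiOn_Umap_Icc : StrictAntiOn Umap (Icc 0 1) :=
  strictAntiOn_Umap.mono ((Icc_subset_Ioi_iff zero_le_one).2 (by norm_num))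

theorem mapsTo_Lmap_Icc : MapsTo Lmap (Icc 0 1) (Icc 0 (1 / 2)) := by
  simpa only [Lmap_zero, Lmap_one] using strictMonoOn_Lmap_Icc.monotoneOn.mapsTo_Icc

theorem mapsTo_Umap_Icc : MapsTo Umap (Icc 0 1) (Icc (1 / 2) 1) := by
  simpa only [Umap_zero, Umap_one] using strictAntiOn_Umap_Icc.antitoneOn.mapsTo_Icc

theorem Lmap_Umap {q : ℚ} (hq : 1 + 3 * q ≠ 0) : Lmap (Umap q) = (1 + q) / (2 + 4 * q) := by
  have h : 1 + Umap q = (2 + 4 * q) / (1 + 3 * q) := by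
    rw [Umap, one_add_div hq]
    ring
  rw [Lmap, h, Umap, div_div_div_cancel_right₀ hq]

theorem Lmap_sub_Lmap_le {a b c : ℚ} (ha : 0 ≤ a) (hb : 0 ≤ b) (hc : 0 < c)
    (h : b - a ≤ 1 / c) : Lmap b - Lmap a ≤ 1 / (c + 1) := by
  rw [le_div_iff₀ hc] at h
  rw [Lmap_sub_Lmap (by positivity) (by positivity),
    div_le_div_iff₀ (by positivity) (by positivity)]
  nlinarith [mul_nonneg ha hb]

theorem Lmap_Umap_sub_Lmap_Umap_le {x y c : ℚ} (hx : 0 ≤ x) (hy : 0 ≤ y) (hc : 0 < c)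
    (h : Lmap x - Lmap y ≤ 1 / c) : Lmap (Umap y) - Lmap (Umap x) ≤ 1 / (c + 1) := by
  rw [Lmap_sub_Lmap (by positivity) (by positivity), div_le_div_iff₀ (by positivity) hc] at h
  rw [Lmap_Umap (by positivity), Lmap_Umap (by positivity),
    div_sub_div _ _ (by positivity) (by positivity),
    div_le_div_iff₀ (by positivity) (by positivity)]
  nlinarith [mul_nonneg hx hy]

theorem Umap_sub_Umap_le {x y c : ℚ} (hx : 0 ≤ x) (hy : 0 ≤ y) (hc : 0 < c)
    (h : Lmap x - Lmap y ≤ 1 / c) : Umap y - Umap x ≤ 2 / (c + 2) := by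
  rw [Lmap_sub_Lmap (by positivity) (by positivity), div_le_div_iff₀ (by positivity) hc] at h
  rw [Umap, Umap, div_sub_div _ _ (by positivity) (by positivity),
    div_le_div_iff₀ (by positivity) (by positivity)]
  nlinarith [mul_nonneg hx hy]

theorem Lset_succ {i : ℕ} (hi : 1 ≤ i) : Lset (i + 1) = Lmap '' (Wset i ∪ {1}) := by
  obtain ⟨n, rfl⟩ := Nat.exists_eq_add_of_le' hi
  rfl

theorem Uset_succ {i : ℕ} (hi : 1 ≤ i) : Uset (i + 1) = Umap '' (Wset i ∪ {1}) := by
  obtain ⟨n, rfl⟩ := Nat.exists_eq_add_of_le' hi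
  rfl

theorem Wset_succ {i : ℕ} (hi : 1 ≤ i) :
    Wset (i + 1) = Lmap '' (Wset i ∪ {1}) ∪ Umap '' (Wset i ∪ {1}) := by
  obtain ⟨n, rfl⟩ := Nat.exists_eq_add_of_le' hi
  rfl

theorem Wset_union_one_subset_Icc : ∀ i, Wset i ∪ {1} ⊆ Icc (0 : ℚ) 1
  | 0 | 1 => by simp [Wset]
  | n + 2 => by
    have h := Wset_union_one_subset_Icc (n + 1)
    refine union_subset (union_subset ?_ ?_) (by simp)
    · exact (mapsTo_Lmap_Icc.mono_left h).image_subset.trans (Icc_subset_Icc le_rfl (by norm_num))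
    · exact (mapsTo_Umap_Icc.mono_left h).image_subset.trans (Icc_subset_Icc (by norm_num) le_rfl)

theorem isGreatest_Wset_union_one (i : ℕ) : IsGreatest (Wset i ∪ {1}) 1 :=
  ⟨Or.inr rfl, fun _ hq => (Wset_union_one_subset_Icc i hq).2⟩

theorem isLeast_Wset_union_one {i : ℕ} (hi : 1 ≤ i) : IsLeast (Wset i ∪ {1}) (1 / i) := by
  induction i, hi using Nat.le_induction with
  | base => simp [Wset]
  | succ i hi ih =>
    have hL := (strictMonoOn_Lmap_Icc.monotoneOn.mono (Wset_union_one_subset_Icc i)).map_isLeast ih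
    have hU := (strictAntiOn_Umap_Icc.antitoneOn.mono (Wset_union_one_subset_Icc i)).map_isGreatest
      (isGreatest_Wset_union_one i)
    have h := (hL.union hU).union (isLeast_singleton (a := (1 : ℚ)))
    rw [Lmap_one_div (by positivity), Umap_one] at h
    have hmin : min (min (1 / ((i : ℚ) + 1)) (1 / 2)) 1 = 1 / ((i : ℚ) + 1) := by
      have hi' : (1 : ℚ) ≤ i := by exact_mod_cast hi
      have h2 : 1 / ((i : ℚ) + 1) ≤ 1 / 2 := by
        rw [div_le_div_iff₀ (by positivity) (by norm_num)]
        linarith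
      rw [min_eq_left h2, min_eq_left (h2.trans (by norm_num))]
    rwa [Wset_succ hi, Nat.cast_succ, ← hmin]

def Xset (i : ℕ) : Set ℚ := insert 0 (Wset i ∪ {1})

theorem Xset_subset_Icc (i : ℕ) : Xset i ⊆ Icc 0 1 :=
  insert_subset (left_mem_Icc.2 zero_le_one) (Wset_union_one_subset_Icc i)

theorem one_mem_Xset (i : ℕ) : (1 : ℚ) ∈ Xset i := by simp [Xset]

theorem image_Lmap_Xset (i : ℕ) : Lmap '' Xset i = insert 0 (Lmap '' (Wset i ∪ {1})) := by
  rw [Xset, image_insert_eq, Lmap_zero]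

theorem image_Umap_Xset (i : ℕ) : Umap '' Xset i = insert 1 (Umap '' (Wset i ∪ {1})) := by
  rw [Xset, image_insert_eq, Umap_zero]

theorem Xset_succ {i : ℕ} (hi : 1 ≤ i) : Xset (i + 1) = Lmap '' Xset i ∪ Umap '' Xset i := by
  rw [image_Lmap_Xset, image_Umap_Xset, Xset, Wset_succ hi]
  ext q
  simp only [mem_insert_iff, mem_union, mem_singleton_iff]
  tauto

theorem Lmap_sub_Lmap_le_of_consecutive_Xset {i : ℕ} (hi : 1 ≤ i) {x y : ℚ}
    (h : Consecutive (Xset i) x y) : Lmap y - Lmap x ≤ 1 / (i + 1) := by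
  induction i, hi using Nat.le_induction generalizing x y with
  | base =>
    obtain ⟨hx, hy, hxy, -⟩ := h
    simp only [Xset, Wset, empty_union, mem_insert_iff, mem_singleton_iff] at hx hy
    rcases hx with rfl | rfl <;> rcases hy with rfl | rfl <;> norm_num [Lmap] at *
  | succ i hi ih =>
    have hX := Xset_subset_Icc i
    have hL : Lmap '' Xset i ⊆ Iic (1 / 2) := fun _ ⟨q, hq, e⟩ => e ▸ (mapsTo_Lmap_Icc (hX hq)).2
    have hU : Umap '' Xset i ⊆ Ici (1 / 2) := fun _ ⟨q, hq, e⟩ => e ▸ (mapsTo_Umap_Icc (hX hq)).1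
    rw [Xset_succ hi] at h
    push_cast
    rcases h.of_union hL hU ⟨1, one_mem_Xset i, Lmap_one⟩ ⟨1, one_mem_Xset i, Umap_one⟩
      with hA | hB
    · obtain ⟨x, hx, rfl⟩ := hA.1
      obtain ⟨y, hy, rfl⟩ := hA.2.1
      exact Lmap_sub_Lmap_le (mapsTo_Lmap_Icc (hX hx)).1 (mapsTo_Lmap_Icc (hX hy)).1
        (by positivity) (ih ((strictMonoOn_Lmap_Icc.mono hX).consecutive_of_image hx hy hA))
    · obtain ⟨x, hx, rfl⟩ := hB.1
      obtain ⟨y, hy, rfl⟩ := hB.2.1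
      exact Lmap_Umap_sub_Lmap_Umap_le (hX hx).1 (hX hy).1
        (by positivity) (ih ((strictAntiOn_Umap_Icc.mono hX).consecutive_of_image hx hy hB))

theorem isLeast_Lset {i : ℕ} (hi : 2 ≤ i) : IsLeast (Lset i) (1 / i) := by
  obtain ⟨n, rfl⟩ : ∃ n, i = n + 1 := ⟨i - 1, by omega⟩
  rw [Lset_succ (by omega), Nat.cast_succ, ← Lmap_one_div (Nat.cast_ne_zero.2 (by omega))]
  exact (strictMonoOn_Lmap_Icc.monotoneOn.mono (Wset_union_one_subset_Icc n)).map_isLeast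
    (isLeast_Wset_union_one (by omega))

theorem isGreatest_Lset {i : ℕ} (hi : 2 ≤ i) : IsGreatest (Lset i) (1 / 2) := by
  obtain ⟨n, rfl⟩ : ∃ n, i = n + 1 := ⟨i - 1, by omega⟩
  rw [Lset_succ (by omega), ← Lmap_one]
  exact (strictMonoOn_Lmap_Icc.monotoneOn.mono (Wset_union_one_subset_Icc n)).map_isGreatest
    (isGreatest_Wset_union_one n)

theorem isGreatest_Uset {i : ℕ} (hi : 2 ≤ i) : IsGreatest (Uset i) (i / (i + 2)) := by
  obtain ⟨n, rfl⟩ : ∃ n, i = n + 1 := ⟨i - 1, by omega⟩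
  have hval : ((n + 1 : ℕ) : ℚ) / ((n + 1 : ℕ) + 2) = Umap (1 / n) := by
    rw [Umap_one_div (Nat.cast_ne_zero.2 (by omega))]
    push_cast
    ring_nf
  rw [Uset_succ (by omega), hval]
  exact (strictAntiOn_Umap_Icc.antitoneOn.mono (Wset_union_one_subset_Icc n)).map_isLeast
    (isLeast_Wset_union_one (by omega))

theorem isLeast_Uset {i : ℕ} (hi : 2 ≤ i) : IsLeast (Uset i) (1 / 2) := by
  obtain ⟨n, rfl⟩ : ∃ n, i = n + 1 := ⟨i - 1, by omega⟩
  rw [Uset_succ (by omega), ← Umap_one]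
  exact (strictAntiOn_Umap_Icc.antitoneOn.mono (Wset_union_one_subset_Icc n)).map_isGreatest
    (isGreatest_Wset_union_one n)

theorem sub_le_of_consecutive_Lset {i : ℕ} (hi : 2 ≤ i) {a b : ℚ} (h : Consecutive (Lset i) a b) :
    b - a ≤ 1 / i := by
  obtain ⟨n, rfl⟩ : ∃ n, i = n + 1 := ⟨i - 1, by omega⟩
  rw [Lset_succ (by omega)] at h
  have ha : 0 ≤ a :=
    ((mapsTo_Lmap_Icc.mono_left (Wset_union_one_subset_Icc n)).image_subset h.1).1
  have h0 : Consecutive (Lmap '' Xset n) a b := by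
    rw [image_Lmap_Xset]
    exact h.insert fun h0 => h0.1.not_ge ha
  obtain ⟨x, hx, rfl⟩ := h0.1
  obtain ⟨y, hy, rfl⟩ := h0.2.1
  push_cast
  exact Lmap_sub_Lmap_le_of_consecutive_Xset (by omega)
    ((strictMonoOn_Lmap_Icc.mono (Xset_subset_Icc n)).consecutive_of_image hx hy h0)

theorem sub_le_of_consecutive_Uset {i : ℕ} (hi : 2 ≤ i) {a b : ℚ} (h : Consecutive (Uset i) a b) :
    b - a ≤ 2 / (i + 2) := by
  obtain ⟨n, rfl⟩ : ∃ n, i = n + 1 := ⟨i - 1, by omega⟩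
  rw [Uset_succ (by omega)] at h
  have hb : b ≤ 1 :=
    ((mapsTo_Umap_Icc.mono_left (Wset_union_one_subset_Icc n)).image_subset h.2.1).2
  have h0 : Consecutive (Umap '' Xset n) a b := by
    rw [image_Umap_Xset]
    exact h.insert fun h1 => h1.2.not_ge hb
  obtain ⟨x, hx, rfl⟩ := h0.1
  obtain ⟨y, hy, rfl⟩ := h0.2.1
  have hX := Xset_subset_Icc n
  push_cast
  exact Umap_sub_Umap_le (hX hx).1 (hX hy).1 (by positivity) (Lmap_sub_Lmap_le_of_consecutive_Xset
    (by omega) ((strictAntiOn_Umap_Icc.mono hX).consecutive_of_image hx hy h0))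

theorem stmt_2 (i : ℕ) (hi : 3 ≤ i) :
    IsLeast (Lset i) (1 / (i : ℚ)) ∧ IsGreatest (Lset i) (1 / 2) ∧
    (∀ q₁ q₂ : ℚ, q₁ ∈ Lset i → q₂ ∈ Lset i → q₁ < q₂ →
      (∀ q₃ ∈ Lset i, ¬(q₁ < q₃ ∧ q₃ < q₂)) → q₂ - q₁ ≤ 1 / (i : ℚ)) ∧
    IsGreatest (Uset i) ((i : ℚ) / ((i : ℚ) + 2)) ∧ IsLeast (Uset i) (1 / 2) ∧
    (∀ q₁ q₂ : ℚ, q₁ ∈ Uset i → q₂ ∈ Uset i → q₁ < q₂ →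
      (∀ q₃ ∈ Uset i, ¬(q₁ < q₃ ∧ q₃ < q₂)) → q₂ - q₁ ≤ 2 / ((i : ℚ) + 2)) := by
  have h2 : 2 ≤ i := by omega
  exact ⟨isLeast_Lset h2, isGreatest_Lset h2,
    fun _ _ h₁ h₂ hlt hgap => sub_le_of_consecutive_Lset h2 ⟨h₁, h₂, hlt, hgap⟩,
    isGreatest_Uset h2, isLeast_Uset h2,
    fun _ _ h₁ h₂ hlt hgap => sub_le_of_consecutive_Uset h2 ⟨h₁, h₂, hlt, hgap⟩⟩
end

section
/- Define finite sets of rationals by L₁ = U₁ = W₁ = ∅ and, for every i ≥ 1, L_{i+1} = { q/(1+q) : q ∈ W_i ∪ {1} }, U_{i+1} = { (1+q)/(1+3q) : q ∈ W_i ∪ {1} }, and W_{i+1} = L_{i+1} ∪ U_{i+1}. Then for every real number r with 0 ≤ r ≤ 1 and every real ε with 0 < ε ≤ 1, setting i = max(3, ⌈2/ε⌉), there exists q ∈ W_i ∪ {1} such that |r − q| ≤ ε. -/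
open Set

theorem Lmap_mem_Wset {n : ℕ} {q : ℚ} (hq : q ∈ Wset (n + 1) ∪ {1}) : Lmap q ∈ Wset (n + 2) :=
  Or.inl ⟨q, hq, rfl⟩

theorem Umap_mem_Wset {n : ℕ} {q : ℚ} (hq : q ∈ Wset (n + 1) ∪ {1}) : Umap q ∈ Wset (n + 2) :=
  Or.inr ⟨q, hq, rfl⟩

theorem Lmap_mem_Ioc {q : ℚ} (hq : q ∈ Ioc 0 1) : Lmap q ∈ Ioc 0 1 := by
  obtain ⟨h0, h1⟩ := hq
  exact ⟨div_pos h0 (by linarith), (div_le_one (by linarith)).2 (by linarith)⟩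

theorem Umap_mem_Ioc {q : ℚ} (hq : q ∈ Ioc 0 1) : Umap q ∈ Ioc 0 1 := by
  obtain ⟨h0, h1⟩ := hq
  exact ⟨div_pos (by linarith) (by linarith), (div_le_one (by linarith)).2 (by linarith)⟩

theorem Wset_union_one_subset_Ioc : ∀ n, Wset n ∪ {1} ⊆ Ioc 0 1
  | 0 | 1 => by simp [Wset]
  | n + 2 => by
    have ih := Wset_union_one_subset_Ioc (n + 1)
    rintro q ((⟨p, hp, rfl⟩ | ⟨p, hp, rfl⟩) | rfl)
    · exact Lmap_mem_Ioc (ih hp)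
    · exact Umap_mem_Ioc (ih hp)
    · simp

theorem Lmap_sub_Lmap_mul_succ_le {a b N : ℚ} (ha : 0 ≤ a) (hb : 0 ≤ b)
    (h : (b - a) * N ≤ 1 + a * b) : (Lmap b - Lmap a) * (N + 1) ≤ 1 + Lmap a * Lmap b := by
  have hD : 0 < (1 + a) * (1 + b) := by positivity
  have hsub : Lmap b - Lmap a = (b - a) / ((1 + a) * (1 + b)) := by
    unfold Lmap; field_simp; ring
  have hmul : 1 + Lmap a * Lmap b = (1 + a + b + 2 * a * b) / ((1 + a) * (1 + b)) := by
    unfold Lmap; field_simp; ring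
  rw [hsub, hmul, div_mul_eq_mul_div, div_le_div_iff_of_pos_right hD]
  nlinarith

theorem Umap_sub_Umap_mul_succ_le {a b N : ℚ} (ha : 0 ≤ a) (hb : 0 ≤ b)
    (h : (b - a) * N ≤ 1 + a * b) : (Umap a - Umap b) * (N + 1) ≤ 1 + Umap b * Umap a := by
  have hD : 0 < (1 + 3 * a) * (1 + 3 * b) := by positivity
  have hsub : Umap a - Umap b = 2 * (b - a) / ((1 + 3 * a) * (1 + 3 * b)) := by
    unfold Umap; field_simp; ring
  have hmul : 1 + Umap b * Umap a
      = 2 * (1 + 2 * a + 2 * b + 5 * a * b) / ((1 + 3 * a) * (1 + 3 * b)) := by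
    unfold Umap; field_simp; ring
  rw [hsub, hmul, div_mul_eq_mul_div, div_le_div_iff_of_pos_right hD]
  nlinarith

/-- The left endpoint may be `0`, which is never reached but is fixed by `Lmap` and sent to `1` by
`Umap`. -/
def IsBracket (n : ℕ) (a b : ℚ) : Prop :=
  (a = 0 ∨ a ∈ Wset n ∪ {1}) ∧ b ∈ Wset n ∪ {1} ∧ (b - a) * n ≤ 1 + a * b

theorem isBracket_one_zero_one : IsBracket 1 0 1 := ⟨Or.inl rfl, Or.inr rfl, by norm_num⟩

namespace IsBracket

variable {n : ℕ} {a b : ℚ}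

theorem left_mem_Icc (h : IsBracket n a b) : a ∈ Icc 0 1 := by
  rcases h.1 with rfl | ha
  · simp
  · exact Ioc_subset_Icc_self (Wset_union_one_subset_Ioc n ha)

theorem right_mem_Icc (h : IsBracket n a b) : b ∈ Icc 0 1 :=
  Ioc_subset_Icc_self (Wset_union_one_subset_Ioc n h.2.1)

theorem map_Lmap (h : IsBracket (n + 1) a b) : IsBracket (n + 2) (Lmap a) (Lmap b) := by
  have hgap := Lmap_sub_Lmap_mul_succ_le h.left_mem_Icc.1 h.right_mem_Icc.1 h.2.2
  obtain ⟨ha, hb, -⟩ := h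
  refine ⟨?_, Or.inl (Lmap_mem_Wset hb), ?_⟩
  · rcases ha with rfl | ha
    · exact Or.inl (by simp [Lmap])
    · exact Or.inr (Or.inl (Lmap_mem_Wset ha))
  · push_cast at hgap ⊢
    linarith

theorem map_Umap (h : IsBracket (n + 1) a b) : IsBracket (n + 2) (Umap b) (Umap a) := by
  have hgap := Umap_sub_Umap_mul_succ_le h.left_mem_Icc.1 h.right_mem_Icc.1 h.2.2
  obtain ⟨ha, hb, -⟩ := h
  refine ⟨Or.inr (Or.inl (Umap_mem_Wset hb)), ?_, ?_⟩
  · rcases ha with rfl | ha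
    · exact Or.inr (by simp [Umap])
    · exact Or.inl (Umap_mem_Wset ha)
  · push_cast at hgap ⊢
    linarith

end IsBracket

theorem Rat.cast_Lmap {K : Type*} [DivisionRing K] [CharZero K] (q : ℚ) :
    ((Lmap q : ℚ) : K) = q / (1 + q) := by
  simp [Lmap]

theorem Rat.cast_Umap {K : Type*} [DivisionRing K] [CharZero K] (q : ℚ) :
    ((Umap q : ℚ) : K) = (1 + q) / (1 + 3 * q) := by
  simp [Umap]

theorem monotoneOn_div_one_add : MonotoneOn (fun x : ℝ => x / (1 + x)) (Ici 0) := by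
  intro x hx y hy hxy
  simp only [mem_Ici] at hx hy
  rw [div_le_div_iff₀ (by linarith) (by linarith)]
  nlinarith

theorem antitoneOn_one_add_div_one_add_three_mul :
    AntitoneOn (fun x : ℝ => (1 + x) / (1 + 3 * x)) (Ici 0) := by
  intro x hx y hy hxy
  simp only [mem_Ici] at hx hy
  rw [div_le_div_iff₀ (by linarith) (by linarith)]
  nlinarith

theorem exists_mem_Icc_eq_div_one_add {r : ℝ} (h0 : 0 ≤ r) (h : r ≤ 1 / 2) :
    ∃ s ∈ Icc (0 : ℝ) 1, r = s / (1 + s) := by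
  have h1r : 0 < 1 - r := by linarith
  refine ⟨r / (1 - r), ⟨by positivity, (div_le_one h1r).2 (by linarith)⟩, ?_⟩
  field_simp
  ring

theorem exists_mem_Icc_eq_one_add_div_one_add_three_mul {r : ℝ} (h : 1 / 2 ≤ r) (h1 : r ≤ 1) :
    ∃ s ∈ Icc (0 : ℝ) 1, r = (1 + s) / (1 + 3 * s) := by
  have h3r : 0 < 3 * r - 1 := by linarith
  refine ⟨(1 - r) / (3 * r - 1),
    ⟨div_nonneg (by linarith) h3r.le, (div_le_one h3r).2 (by linarith)⟩, ?_⟩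
  rw [one_add_div h3r.ne', mul_div_assoc', one_add_div h3r.ne',
    div_div_div_cancel_right₀ h3r.ne', eq_div_iff (by ring_nf; norm_num)]
  ring

theorem exists_isBracket_le_le (n : ℕ) {r : ℝ} (h0 : 0 ≤ r) (h1 : r ≤ 1) :
    ∃ a b : ℚ, IsBracket (n + 1) a b ∧ (a : ℝ) ≤ r ∧ r ≤ b := by
  induction n generalizing r with
  | zero => exact ⟨0, 1, isBracket_one_zero_one, by simpa, by simpa⟩
  | succ n ih =>
    rcases le_total r (1 / 2) with h | h
    · obtain ⟨s, hs, rfl⟩ := exists_mem_Icc_eq_div_one_add h0 h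
      obtain ⟨a, b, hab, has, hsb⟩ := ih hs.1 hs.2
      have ha : (0 : ℝ) ≤ a := by exact_mod_cast hab.left_mem_Icc.1
      have hb : (0 : ℝ) ≤ b := by exact_mod_cast hab.right_mem_Icc.1
      refine ⟨Lmap a, Lmap b, hab.map_Lmap, ?_, ?_⟩ <;> rw [Rat.cast_Lmap]
      · exact monotoneOn_div_one_add ha hs.1 has
      · exact monotoneOn_div_one_add hs.1 hb hsb
    · obtain ⟨s, hs, rfl⟩ := exists_mem_Icc_eq_one_add_div_one_add_three_mul h h1
      obtain ⟨a, b, hab, has, hsb⟩ := ih hs.1 hs.2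
      have ha : (0 : ℝ) ≤ a := by exact_mod_cast hab.left_mem_Icc.1
      have hb : (0 : ℝ) ≤ b := by exact_mod_cast hab.right_mem_Icc.1
      refine ⟨Umap b, Umap a, hab.map_Umap, ?_, ?_⟩ <;> rw [Rat.cast_Umap]
      · exact antitoneOn_one_add_div_one_add_three_mul hs.1 hb hsb
      · exact antitoneOn_one_add_div_one_add_three_mul ha hs.1 has

theorem exists_mem_Wset_abs_sub_le (n : ℕ) {r : ℝ} (h0 : 0 ≤ r) (h1 : r ≤ 1) :
    ∃ q ∈ Wset (n + 1) ∪ {1}, |r - q| ≤ 1 / (n + 1) := by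
  obtain ⟨a, b, hab, har, hrb⟩ := exists_isBracket_le_le n h0 h1
  have hgap : ((b : ℝ) - a) * (n + 1) ≤ 1 + a * b := by exact_mod_cast hab.2.2
  have ha : (0 : ℝ) ≤ a ∧ (a : ℝ) ≤ 1 := by exact_mod_cast hab.left_mem_Icc
  have hb : (0 : ℝ) ≤ b ∧ (b : ℝ) ≤ 1 := by exact_mod_cast hab.right_mem_Icc
  simp only [le_div_iff₀ (by positivity : (0 : ℝ) < n + 1)]
  rcases hab.1 with rfl | haW
  · refine ⟨b, hab.2.1, ?_⟩
    rw [abs_sub_comm, abs_of_nonneg (by linarith)]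
    simp only [Rat.cast_zero, sub_zero, zero_mul, add_zero] at hgap
    nlinarith
  · have hgap2 : ((b : ℝ) - a) * (n + 1) ≤ 2 := hgap.trans (by nlinarith)
    rcases le_total (r - a) (b - r) with hc | hc
    · refine ⟨a, haW, ?_⟩
      rw [abs_of_nonneg (by linarith)]
      nlinarith
    · refine ⟨b, hab.2.1, ?_⟩
      rw [abs_sub_comm, abs_of_nonneg (by linarith)]
      nlinarith

theorem stmt_3_general (r ε : ℝ) (hr0 : 0 ≤ r) (hr1 : r ≤ 1) (hε0 : 0 < ε) :
    ∃ q ∈ Wset (max 3 ⌈2 / ε⌉₊) ∪ {1}, |r - (q : ℝ)| ≤ ε := by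
  obtain ⟨n, hn⟩ := Nat.exists_eq_add_one_of_ne_zero (by positivity : max 3 ⌈2 / ε⌉₊ ≠ 0)
  obtain ⟨q, hq, hrq⟩ := exists_mem_Wset_abs_sub_le n hr0 hr1
  refine ⟨q, hn ▸ hq, hrq.trans ?_⟩
  have hceil : 2 / ε ≤ n + 1 := by
    exact_mod_cast (Nat.le_ceil (2 / ε)).trans (by exact_mod_cast hn ▸ le_max_right _ _)
  rw [div_le_iff₀ hε0] at hceil
  rw [div_le_iff₀ (by positivity)]
  linarith

theorem stmt_3 (r ε : ℝ) (hr0 : 0 ≤ r) (hr1 : r ≤ 1) (hε0 : 0 < ε) (hε1 : ε ≤ 1) :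
    ∃ q ∈ Wset (max 3 ⌈2 / ε⌉₊) ∪ {1}, |r - (q : ℝ)| ≤ ε :=
  stmt_3_general r ε hr0 hr1 hε0
end

section
/- Let h : [0,1) → ℝ be defined by h(x) = (1/2)(1−x)(1+exp(2x/(x−1))). Then h is strictly decreasing on [0,1); the equation h(x) = x has a unique solution u in [0,1); this solution satisfies u ≤ 39/100; and the number w := u/(1−u) satisfies 1/2 ≤ w ≤ 64/100. -/
/-! The map `h` (`decayMap` below) is a product of two positive strictly decreasing factors on
`(-∞, 1)`, so it has at most one fixed point there, and any fixed point `u` lies on the correct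
side of every `a` according to the sign of `h a - a`. Evaluating `h` at `1/3` and `39/100`
therefore traps `u` in `[1/3, 39/100]` (the upper bound reduces to `61/17 < exp (78/61)`, checked
with a Taylor polynomial), the intermediate value theorem produces `u` there, and `u/(1-u)` is
then between `1/2` and `39/61 < 64/100`. -/

open Real Set

lemma StrictAntiOn.mul_of_nonneg {α M₀ : Type*} [Preorder α] [MulZeroClass M₀] [PartialOrder M₀]
    [PosMulStrictMono M₀] [MulPosStrictMono M₀] {f g : α → M₀} {s : Set α}
    (hf : StrictAntiOn f s) (hg : StrictAntiOn g s) (hf₀ : ∀ x ∈ s, 0 ≤ f x)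
    (hg₀ : ∀ x ∈ s, 0 ≤ g x) : StrictAntiOn (fun x => f x * g x) s :=
  fun _ hx _ hy h => mul_lt_mul'' (hf hx hy h) (hg hx hy h) (hf₀ _ hy) (hg₀ _ hy)

section FixedPoint

variable {α : Type*} [LinearOrder α] {f : α → α} {s : Set α} {a u : α}

lemma StrictAntiOn.le_of_map_le_of_map_eq_self (hf : StrictAntiOn f s) (ha : a ∈ s) (hu : u ∈ s)
    (hfa : f a ≤ a) (hfu : f u = u) : u ≤ a := by
  by_contra! hau
  have := hf ha hu hau
  order

lemma StrictAntiOn.le_of_le_map_of_map_eq_self (hf : StrictAntiOn f s) (ha : a ∈ s) (hu : u ∈ s)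
    (hfa : a ≤ f a) (hfu : f u = u) : a ≤ u := by
  by_contra! hua
  have := hf hu ha hua
  order

lemma StrictAntiOn.eq_of_map_eq_self (hf : StrictAntiOn f s) {v : α} (hu : u ∈ s) (hv : v ∈ s)
    (hfu : f u = u) (hfv : f v = v) : u = v :=
  le_antisymm (hf.le_of_map_le_of_map_eq_self hv hu hfv.le hfu)
    (hf.le_of_le_map_of_map_eq_self hv hu hfv.ge hfu)

end FixedPoint

noncomputable def decayMap (x : ℝ) : ℝ := 1 / 2 * (1 - x) * (1 + exp (2 * x / (x - 1)))

lemma strictAntiOn_two_mul_div_sub_one : StrictAntiOn (fun x : ℝ => 2 * x / (x - 1)) (Iio 1) := by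
  intro x hx y hy hxy
  have hx1 : x - 1 < 0 := sub_neg.mpr hx
  have hy1 : y - 1 < 0 := sub_neg.mpr hy
  have hdiff : 2 * x / (x - 1) - 2 * y / (y - 1) = 2 * (y - x) / ((x - 1) * (y - 1)) := by
    field_simp [hx1.ne, hy1.ne]
    ring
  have : 0 < 2 * (y - x) / ((x - 1) * (y - 1)) :=
    div_pos (by linarith) (mul_pos_of_neg_of_neg hx1 hy1)
  change 2 * y / (y - 1) < 2 * x / (x - 1)
  linarith

lemma strictAntiOn_decayMap : StrictAntiOn decayMap (Iio 1) := by
  refine StrictAntiOn.mul_of_nonneg ?_ ?_ ?_ ?_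
  · exact fun x _ y _ hxy => by linarith
  · exact fun x hx y hy hxy =>
      add_lt_add_right (exp_lt_exp.mpr (strictAntiOn_two_mul_div_sub_one hx hy hxy)) 1
  · exact fun x (hx : x < 1) => by linarith
  · exact fun x _ => by positivity

lemma continuousOn_decayMap : ContinuousOn decayMap (Iio 1) := by
  unfold decayMap
  refine ContinuousOn.mul (by fun_prop)
    (continuousOn_const.add (continuous_exp.comp_continuousOn ?_))
  exact ContinuousOn.div (by fun_prop) (by fun_prop) fun x hx => (sub_neg.mpr hx).ne

lemma lt_decayMap_one_third : (1 / 3 : ℝ) < decayMap (1 / 3) := by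
  have : decayMap (1 / 3) = 1 / 3 * (1 + exp (-1)) := by norm_num [decayMap]
  rw [this]
  linarith [exp_pos (-1)]

lemma lt_exp_78_div_61 : (61 / 17 : ℝ) < exp (78 / 61) := by
  refine lt_of_lt_of_le ?_ (sum_le_exp_of_nonneg (by norm_num) 9)
  simp only [Finset.sum_range_succ]
  norm_num [Nat.factorial]

lemma decayMap_39_div_100_le : decayMap (39 / 100) ≤ 39 / 100 := by
  have h : decayMap (39 / 100) = 61 / 200 * (1 + exp (-(78 / 61))) := by norm_num [decayMap]
  have hexp : exp (-(78 / 61)) ≤ 17 / 61 := by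
    rw [exp_neg, inv_le_comm₀ (exp_pos _) (by norm_num)]
    linarith [lt_exp_78_div_61]
  rw [h]
  linarith

lemma mem_Icc_of_decayMap_eq_self {u : ℝ} (hu : u < 1) (hfu : decayMap u = u) :
    u ∈ Icc (1 / 3) (39 / 100) :=
  ⟨strictAntiOn_decayMap.le_of_le_map_of_map_eq_self (by norm_num) hu lt_decayMap_one_third.le hfu,
    strictAntiOn_decayMap.le_of_map_le_of_map_eq_self (by norm_num) hu decayMap_39_div_100_le hfu⟩

lemma exists_decayMap_eq_self : ∃ u ∈ Icc (1 / 3 : ℝ) (39 / 100), decayMap u = u := by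
  have hcont : ContinuousOn (fun x => decayMap x - x) (Icc (1 / 3) (39 / 100)) :=
    (continuousOn_decayMap.mono fun x hx => by norm_num at hx ⊢; linarith [hx.2]).sub
      continuousOn_id
  have hmem : (0 : ℝ) ∈ Icc (decayMap (39 / 100) - 39 / 100) (decayMap (1 / 3) - 1 / 3) :=
    ⟨by linarith [decayMap_39_div_100_le], by linarith [lt_decayMap_one_third]⟩
  obtain ⟨u, hu, hfu⟩ := intermediate_value_Icc' (by norm_num) hcont hmem
  exact ⟨u, hu, sub_eq_zero.mp hfu⟩

theorem stmt_4 :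
    StrictAntiOn (fun x : ℝ => (1 / 2) * (1 - x) * (1 + Real.exp (2 * x / (x - 1))))
      (Set.Ico 0 1) ∧
    (∃! u : ℝ, u ∈ Set.Ico (0 : ℝ) 1 ∧
      (1 / 2) * (1 - u) * (1 + Real.exp (2 * u / (u - 1))) = u) ∧
    (∀ u ∈ Set.Ico (0 : ℝ) 1,
      (1 / 2) * (1 - u) * (1 + Real.exp (2 * u / (u - 1))) = u →
        u ≤ 39 / 100 ∧ 1 / 2 ≤ u / (1 - u) ∧ u / (1 - u) ≤ 64 / 100) := by
  change StrictAntiOn decayMap _ ∧ (∃! u, u ∈ Ico 0 1 ∧ decayMap u = u) ∧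
    ∀ u ∈ Ico 0 1, decayMap u = u → _
  obtain ⟨u, hu, hfu⟩ := exists_decayMap_eq_self
  refine ⟨strictAntiOn_decayMap.mono Ico_subset_Iio_self,
    ⟨u, ⟨⟨by linarith [hu.1], by linarith [hu.2]⟩, hfu⟩, fun v hv => ?_⟩, fun v hv hfv => ?_⟩
  · exact strictAntiOn_decayMap.eq_of_map_eq_self hv.1.2 (by linarith [hu.2] : u < 1) hv.2 hfu
  · obtain ⟨hv₁, hv₂⟩ := mem_Icc_of_decayMap_eq_self hv.2 hfv
    have h1v : 0 < 1 - v := by linarith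
    refine ⟨hv₂, ?_, ?_⟩
    · rw [le_div_iff₀ h1v]; linarith
    · rw [div_le_iff₀ h1v]; linarith
end

section
/- Let x, y ≥ 0 be real numbers satisfying x·e^x ≤ cosh x and y·e^y ≤ cosh y. Define z₁ = cosh(x+y) + y·e^y·cosh x + x·e^x·sinh y, z₂ = x·e^x·cosh y + y·e^y·sinh x, and z₃ = x·y·e^{x+y} + sinh x · cosh y. Then z₁ ≥ z₂ ≥ z₃. In particular, z₂ − z₃ = (x e^x − sinh x)(cosh y − y e^y) ≥ 0. -/
/-!
Write `a = x eˣ`, `b = y eʸ`. Since `cosh - sinh = exp ∘ neg`, the first difference is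
`z₁ - z₂ = cosh (x + y) + b e⁻ˣ - a e⁻ʸ`, and `a e⁻ʸ ≤ cosh x ≤ cosh (x + y)`.
The second difference factors as `(a - sinh x)(cosh y - b)`, and `sinh x ≤ x eˣ` is
`1 - 2x ≤ e⁻²ˣ` multiplied by `eˣ / 2`.
-/

open Real

lemma Real.sinh_le_mul_exp (x : ℝ) : sinh x ≤ x * exp x := by
  have h : -2 * x + 1 ≤ exp (-2 * x) := add_one_le_exp _
  have hexp : exp (-2 * x) * exp x = exp (-x) := by rw [← exp_add]; ring_nf
  rw [sinh_eq]
  nlinarith [mul_le_mul_of_nonneg_right h (exp_pos x).le]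

lemma Real.mul_exp_neg_le_cosh_add {a x y : ℝ} (hx : 0 ≤ x) (hy : 0 ≤ y) (ha : a ≤ cosh x) :
    a * exp (-y) ≤ cosh (x + y) :=
  calc a * exp (-y) ≤ cosh x * exp (-y) := mul_le_mul_of_nonneg_right ha (exp_pos _).le
    _ ≤ cosh x := mul_le_of_le_one_right (cosh_pos x).le (exp_le_one_iff.mpr (by linarith))
    _ ≤ cosh (x + y) := cosh_le_cosh.mpr (by rw [abs_of_nonneg hx, abs_of_nonneg (by linarith)]; linarith)

theorem stmt_8 (x y : ℝ) (hx : 0 ≤ x) (hy : 0 ≤ y)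
    (hxb : x * Real.exp x ≤ Real.cosh x) (hyb : y * Real.exp y ≤ Real.cosh y) :
    Real.cosh (x + y) + y * Real.exp y * Real.cosh x + x * Real.exp x * Real.sinh y ≥
        x * Real.exp x * Real.cosh y + y * Real.exp y * Real.sinh x ∧
    x * Real.exp x * Real.cosh y + y * Real.exp y * Real.sinh x ≥
        x * y * Real.exp (x + y) + Real.sinh x * Real.cosh y ∧
    (x * Real.exp x * Real.cosh y + y * Real.exp y * Real.sinh x) -
        (x * y * Real.exp (x + y) + Real.sinh x * Real.cosh y) =
      (x * Real.exp x - Real.sinh x) * (Real.cosh y - y * Real.exp y) ∧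
    (x * Real.exp x - Real.sinh x) * (Real.cosh y - y * Real.exp y) ≥ 0 := by
  have hfirst : Real.cosh (x + y) + y * Real.exp y * Real.cosh x + x * Real.exp x * Real.sinh y -
      (x * Real.exp x * Real.cosh y + y * Real.exp y * Real.sinh x) =
      Real.cosh (x + y) + y * Real.exp y * Real.exp (-x) - x * Real.exp x * Real.exp (-y) := by
    rw [← cosh_sub_sinh, ← cosh_sub_sinh]; ring
  have hfactor : (x * Real.exp x * Real.cosh y + y * Real.exp y * Real.sinh x) -
      (x * y * Real.exp (x + y) + Real.sinh x * Real.cosh y) =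
      (x * Real.exp x - Real.sinh x) * (Real.cosh y - y * Real.exp y) := by
    rw [exp_add]; ring
  have hprod : (x * Real.exp x - Real.sinh x) * (Real.cosh y - y * Real.exp y) ≥ 0 :=
    mul_nonneg (sub_nonneg.mpr (sinh_le_mul_exp x)) (sub_nonneg.mpr hyb)
  have hb : 0 ≤ y * Real.exp y * Real.exp (-x) := by positivity
  have ha := mul_exp_neg_le_cosh_add hx hy hxb
  exact ⟨by linarith, by linarith, hfactor, hprod⟩
end

section
/- Let D be a compact, simply connected subset of ℝ², and let g : ℝ² → ℝ² be continuously differentiable on a neighborhood of D. Assume that the image g(∂D) of the topological boundary of D is a simple closed curve (i.e., the image of a continuous injective map from the circle), and that the Jacobian determinant of g does not vanish at any point of the interior of D. Then g(D) is contained in the union of g(∂D) and the bounded connected components of the complement ℝ² \ g(∂D); equivalently, g(D) does not meet the unbounded connected component of ℝ² \ g(∂D). -/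
/-!
Since the Jacobian does not vanish, the inverse function theorem makes `g` open on the interior
of `D`, so every boundary point of the compact set `g(D)` is the image of a boundary point of `D`.
A connected component of the complement of `g(∂D)` that meets `g(D)` therefore never crosses the
boundary of `g(D)`, and is trapped inside the bounded set `g(D)`.
-/

open Set

theorem IsPreconnected.subset_of_disjoint_frontier {X : Type*} [TopologicalSpace X]
    {C S : Set X} (hC : IsPreconnected C) (hCS : (C ∩ S).Nonempty)
    (hfr : Disjoint C (frontier S)) : C ⊆ S := by
  have hcover : C ⊆ interior S ∪ (closure S)ᶜ := fun x hxC => by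
    by_cases hx : x ∈ closure S
    · exact .inl (not_not.mp fun hxi => hfr.notMem_of_mem_left hxC ⟨hx, hxi⟩)
    · exact .inr hx
  obtain ⟨x, hxC, hxS⟩ := hCS
  have hmeet : (C ∩ interior S).Nonempty :=
    ⟨x, hxC, (hcover hxC).resolve_right (not_not.mpr (subset_closure hxS))⟩
  exact (hC.subset_left_of_subset_union isOpen_interior isClosed_closure.isOpen_compl
    (disjoint_compl_right.mono_left interior_subset_closure) hcover hmeet).trans interior_subset

theorem frontier_image_subset_image_frontier {X Y : Type*} [TopologicalSpace X]
    [TopologicalSpace Y] {f : X → Y} {K : Set X} (hclosed : IsClosed (f '' K))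
    (hopen : IsOpen (f '' interior K)) : frontier (f '' K) ⊆ f '' frontier K := by
  intro y hy
  obtain ⟨x, hxK, rfl⟩ := hclosed.frontier_subset hy
  refine ⟨x, ⟨subset_closure hxK, fun hxi => hy.2 ?_⟩, rfl⟩
  exact interior_maximal (image_mono interior_subset) hopen ⟨x, hxi, rfl⟩

theorem ContDiffOn.isOpen_image_of_det_fderiv_ne_zero {𝕜 E : Type*} [RCLike 𝕜]
    [NormedAddCommGroup E] [NormedSpace 𝕜 E] [FiniteDimensional 𝕜 E] {f : E → E} {V : Set E}
    (hf : ContDiffOn 𝕜 1 f V) (hV : IsOpen V) (hdet : ∀ x ∈ V, (fderiv 𝕜 f x).det ≠ 0) :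
    IsOpen (f '' V) := by
  have := FiniteDimensional.complete 𝕜 E
  rw [isOpen_iff_mem_nhds]
  rintro _ ⟨x, hx, rfl⟩
  have hstrict : HasStrictFDerivAt f
      ((fderiv 𝕜 f x).toContinuousLinearEquivOfDetNeZero (hdet x hx) : E →L[𝕜] E) x := by
    rw [ContinuousLinearMap.coe_toContinuousLinearEquivOfDetNeZero]
    exact (hf.contDiffAt (hV.mem_nhds hx)).hasStrictFDerivAt one_ne_zero
  rw [← hstrict.map_nhds_eq_of_equiv]
  exact Filter.image_mem_map (hV.mem_nhds hx)

theorem stmt_10_general (D : Set (ℝ × ℝ)) (g : ℝ × ℝ → ℝ × ℝ)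
    (hDcomp : IsCompact D)
    (U : Set (ℝ × ℝ)) (hDU : D ⊆ U) (hg : ContDiffOn ℝ 1 g U)
    (hjac : ∀ z ∈ interior D, (fderiv ℝ g z).det ≠ 0) :
    ∀ z ∈ D, g z ∉ g '' frontier D →
      Bornology.IsBounded (connectedComponentIn (g '' frontier D)ᶜ (g z)) := by
  intro z hzD hzB
  have hgD : IsCompact (g '' D) := hDcomp.image_of_continuousOn (hg.continuousOn.mono hDU)
  have hopen : IsOpen (g '' interior D) :=
    (hg.mono (interior_subset.trans hDU)).isOpen_image_of_det_fderiv_ne_zero isOpen_interior hjac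
  have hfr : frontier (g '' D) ⊆ g '' frontier D :=
    frontier_image_subset_image_frontier hgD.isClosed hopen
  have hsub : connectedComponentIn (g '' frontier D)ᶜ (g z) ⊆ g '' D :=
    isPreconnected_connectedComponentIn.subset_of_disjoint_frontier
      ⟨g z, mem_connectedComponentIn hzB, mem_image_of_mem g hzD⟩
      (disjoint_compl_left.mono (connectedComponentIn_subset _ _) hfr)
  exact hgD.isBounded.subset hsub

theorem stmt_10 (D : Set (ℝ × ℝ)) (g : ℝ × ℝ → ℝ × ℝ)
    (hDcomp : IsCompact D) (hDsc : SimplyConnectedSpace D)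
    (U : Set (ℝ × ℝ)) (hUopen : IsOpen U) (hDU : D ⊆ U) (hg : ContDiffOn ℝ 1 g U)
    (γ : Circle → ℝ × ℝ) (hγc : Continuous γ) (hγi : Function.Injective γ)
    (hγr : Set.range γ = g '' frontier D)
    (hjac : ∀ z ∈ interior D, (fderiv ℝ g z).det ≠ 0) :
    ∀ z ∈ D, g z ∉ g '' frontier D →
      Bornology.IsBounded (connectedComponentIn (g '' frontier D)ᶜ (g z)) :=
  stmt_10_general D g hDcomp U hDU hg hjac
end

section
/- For every real number x with 0 < x < 16/25, one has 4x·e^{2x} + 4x²·e^{2x} + 1 − e^{4x} > 0. -/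
/-!
Dividing by `2 e^{2x}`, the claim becomes `sinh y < y + y²/2` for `y = 2x ∈ (0, 32/25)`.
Since `e^{-y} ≥ 1 - y`, this follows from `e^y < 1 + y + y²`, which for `y ≤ 3/2` comes from
squaring the cubic Taylor bound `e^{y/2} ≤ 1 + y/2 + y²/8 + y³/36`.
-/

open Real

lemma exp_le_one_add_add_sq_div_two_add_cube {u : ℝ} (h0 : 0 ≤ u) (h1 : u ≤ 1) :
    exp u ≤ 1 + u + u ^ 2 / 2 + 2 / 9 * u ^ 3 := by
  have h := exp_bound' h0 h1 (n := 3) (by norm_num)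
  norm_num [Finset.sum_range_succ, Nat.factorial] at h
  linarith

lemma exp_lt_one_add_add_sq {y : ℝ} (h0 : 0 < y) (h1 : y ≤ 3 / 2) :
    exp y < 1 + y + y ^ 2 := by
  set u := y / 2 with hu
  have hy : y = 2 * u := by rw [hu]; ring
  have hu0 : 0 < u := by positivity
  have hu1 : u ≤ 3 / 4 := by linarith
  have hbound := exp_le_one_add_add_sq_div_two_add_cube hu0.le (by linarith)
  calc exp y = exp u ^ 2 := by rw [hy, ← exp_nat_mul]; norm_num
    _ ≤ (1 + u + u ^ 2 / 2 + 2 / 9 * u ^ 3) ^ 2 := by gcongr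
    _ < 1 + y + y ^ 2 := by
      rw [hy]
      nlinarith [mul_nonneg (pow_pos hu0 2).le (sub_nonneg.2 hu1), pow_pos hu0 3, pow_pos hu0 4,
        pow_pos hu0 5, mul_nonneg (pow_pos hu0 3).le (sub_nonneg.2 hu1)]

lemma sinh_lt_add_sq_div_two {y : ℝ} (h0 : 0 < y) (h1 : y ≤ 3 / 2) :
    sinh y < y + y ^ 2 / 2 := by
  have hneg := add_one_le_exp (-y)
  have hpos := exp_lt_one_add_add_sq h0 h1
  rw [sinh_eq]
  linarith

theorem stmt_11 (x : ℝ) (h0 : 0 < x) (h1 : x < 16 / 25) :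
    0 < 4 * x * Real.exp (2 * x) + 4 * x ^ 2 * Real.exp (2 * x) + 1 - Real.exp (4 * x) := by
  have hsinh := sinh_lt_add_sq_div_two (y := 2 * x) (by positivity) (by linarith)
  have hfactor : 4 * x * exp (2 * x) + 4 * x ^ 2 * exp (2 * x) + 1 - exp (4 * x)
      = 2 * exp (2 * x) * (2 * x + (2 * x) ^ 2 / 2 - sinh (2 * x)) := by
    have h4 : exp (4 * x) = exp (2 * x) * exp (2 * x) := by rw [← exp_add]; ring_nf
    have hinv : exp (2 * x) * exp (-(2 * x)) = 1 := by rw [← exp_add]; simp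
    rw [sinh_eq, h4]
    linear_combination -hinv
  rw [hfactor]
  have hgap : 0 < 2 * x + (2 * x) ^ 2 / 2 - sinh (2 * x) := by linarith
  positivity
end

section
/- For every c ∈ [0, 1/2], the function f_c : [0,1) → ℝ defined by f_c(x) = −(1/2)(x−1)(1 + (2c−1)·exp(2x/(x−1))) is concave on [0,1). -/
open Real Set

/-! Writing `f_c(x) = (1 - x)/2 - (1/2 - c) φ(x)` with `φ(x) = (1 - x) exp(2x/(x-1))`,
it suffices that `φ` is convex on `x < 1`; indeed `φ'' = 4 exp(2x/(x-1)) / (1 - x)³ > 0` there. -/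

lemma hasDerivAt_two_mul_div_sub_one {x : ℝ} (hx : x ≠ 1) :
    HasDerivAt (fun x : ℝ => 2 * x / (x - 1)) (-2 / (x - 1) ^ 2) x := by
  have hx' : x - 1 ≠ 0 := sub_ne_zero.mpr hx
  refine (((hasDerivAt_id' x).const_mul 2).div ((hasDerivAt_id' x).sub_const 1) hx').congr_deriv ?_
  field_simp
  ring

lemma hasDerivAt_one_sub_mul_exp_two_mul_div_sub_one {x : ℝ} (hx : x ≠ 1) :
    HasDerivAt (fun x : ℝ => (1 - x) * exp (2 * x / (x - 1)))
      (exp (2 * x / (x - 1)) * (2 / (x - 1) - 1)) x := by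
  have hx' : x - 1 ≠ 0 := sub_ne_zero.mpr hx
  refine (((hasDerivAt_id' x).const_sub 1).mul (hasDerivAt_two_mul_div_sub_one hx).exp).congr_deriv ?_
  field_simp
  ring

lemma hasDerivAt_exp_two_mul_div_sub_one_mul {x : ℝ} (hx : x ≠ 1) :
    HasDerivAt (fun x : ℝ => exp (2 * x / (x - 1)) * (2 / (x - 1) - 1))
      (4 * exp (2 * x / (x - 1)) / (1 - x) ^ 3) x := by
  have hx' : x - 1 ≠ 0 := sub_ne_zero.mpr hx
  have hx'' : 1 - x ≠ 0 := sub_ne_zero.mpr hx.symm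
  refine ((hasDerivAt_two_mul_div_sub_one hx).exp.mul
    (((hasDerivAt_const x 2).div ((hasDerivAt_id' x).sub_const 1) hx').sub_const 1)).congr_deriv ?_
  simp only [Pi.div_apply]
  field_simp
  ring

lemma convexOn_one_sub_mul_exp_two_mul_div_sub_one :
    ConvexOn ℝ (Iio 1) (fun x : ℝ => (1 - x) * exp (2 * x / (x - 1))) := by
  have hD : interior (Iio (1 : ℝ)) = Iio 1 := interior_Iio
  refine convexOn_of_hasDerivWithinAt2_nonneg (convex_Iio 1)
    (f' := fun x => exp (2 * x / (x - 1)) * (2 / (x - 1) - 1))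
    (f'' := fun x => 4 * exp (2 * x / (x - 1)) / (1 - x) ^ 3)
    (fun x hx => ?_) (fun x hx => ?_) (fun x hx => ?_) (fun x hx => ?_) <;> rw [hD] at *
  · exact (hasDerivAt_one_sub_mul_exp_two_mul_div_sub_one hx.ne).continuousAt.continuousWithinAt
  · exact (hasDerivAt_one_sub_mul_exp_two_mul_div_sub_one hx.ne).hasDerivWithinAt
  · exact (hasDerivAt_exp_two_mul_div_sub_one_mul hx.ne).hasDerivWithinAt
  · have : 0 < 1 - x := sub_pos.mpr hx
    positivity

theorem stmt_12 (c : ℝ) (hc : c ∈ Set.Icc (0 : ℝ) (1 / 2)) :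
    ConcaveOn ℝ (Set.Ico (0 : ℝ) 1)
      (fun x : ℝ => -(1 / 2) * (x - 1) * (1 + (2 * c - 1) * Real.exp (2 * x / (x - 1)))) := by
  have hconvex : Convex ℝ (Ico (0 : ℝ) 1) := convex_Ico 0 1
  have hφ := (convexOn_one_sub_mul_exp_two_mul_div_sub_one.subset Ico_subset_Iio_self
    hconvex).smul (sub_nonneg.mpr hc.2)
  have hid := (convexOn_id hconvex).smul (by norm_num : (0 : ℝ) ≤ 1 / 2)
  refine ((concaveOn_const (1 / 2) hconvex).sub (hid.add hφ)).congr fun x _ => ?_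
  simp only [Pi.sub_apply, Pi.add_apply, smul_eq_mul, id]
  ring
end

section
/- For every c ∈ [0, 1/2], the equation f_c(x) = x, where f_c(x) = −(1/2)(x−1)(1 + (2c−1)·exp(2x/(x−1))), has at least one solution x in the interval [0, 1/3]. -/
/-! Since `f_c ≤ f_{1/2}` and `f_{1/2}(x) = (1 - x)/2` fixes `1/3`, we get `f_c(1/3) ≤ 1/3`, while
`f_c(0) = c ≥ 0`; as `f_c` is continuous on `[0, 1/3]`, the intermediate value theorem gives a fixed
point there. -/

open Real Set

noncomputable def fc (c x : ℝ) : ℝ :=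
  -(1 / 2) * (x - 1) * (1 + (2 * c - 1) * exp (2 * x / (x - 1)))

theorem continuousOn_fc (c : ℝ) : ContinuousOn (fc c) (Iio 1) := by
  unfold fc
  refine ContinuousOn.mul (by fun_prop) (ContinuousOn.add continuousOn_const ?_)
  refine continuousOn_const.mul (continuous_exp.comp_continuousOn ?_)
  exact ContinuousOn.div (by fun_prop) (by fun_prop) fun x hx => sub_ne_zero.2 (ne_of_lt hx)

theorem fc_zero (c : ℝ) : fc c 0 = c := by
  simp [fc]

theorem fc_half (x : ℝ) : fc (1 / 2) x = (1 - x) / 2 := by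
  simp only [fc]
  ring

theorem fc_le_fc_half {c x : ℝ} (hc : c ≤ 1 / 2) (hx : x < 1) : fc c x ≤ fc (1 / 2) x := by
  have hterm : (2 * c - 1) * exp (2 * x / (x - 1)) ≤ 0 :=
    mul_nonpos_of_nonpos_of_nonneg (by linarith) (exp_pos _).le
  simp only [fc]
  nlinarith

theorem fc_one_third_le {c : ℝ} (hc : c ≤ 1 / 2) : fc c (1 / 3) ≤ 1 / 3 := by
  calc fc c (1 / 3) ≤ fc (1 / 2) (1 / 3) := fc_le_fc_half hc (by norm_num)
    _ = 1 / 3 := by rw [fc_half]; norm_num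

theorem stmt_14 (c : ℝ) (hc : c ∈ Set.Icc (0 : ℝ) (1 / 2)) :
    ∃ x ∈ Set.Icc (0 : ℝ) (1 / 3),
      -(1 / 2) * (x - 1) * (1 + (2 * c - 1) * Real.exp (2 * x / (x - 1))) = x := by
  have hcont : ContinuousOn (fc c) (Icc 0 (1 / 3)) :=
    (continuousOn_fc c).mono fun x hx => show x < 1 by linarith [hx.2]
  have hzero : 0 ≤ fc c 0 := (fc_zero c).symm ▸ hc.1
  exact exists_mem_Icc_isFixedPt hcont (by norm_num) hzero (fc_one_third_le hc.2)
end
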